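/- Let k and n be positive integers. A tableau T ∈ T_n^k is uniquely determined by the sequence of its row-(k+1) (bottom row) entries: if two tableaux in T_n^k have the same bottom row, they are equal. Moreover, an increasing sequence b_1 < b_2 < ⋯ < b_n with b_n = (k+1)n occurs as the bottom-row entries (left to right) of some T ∈ T_n^k if and only if b_j ≥ j(k+1) for all 1 ≤ j ≤ n. -/

import Mathlib

open scoped Classical

/-- Number of North steps (letters `true`) among the first `i` letters of `w`. -/
def upCount (w : List Bool) (i : ℕ) : ℕ := (w.take i).count true

/-- Number of East steps (letters `false`) among the first `i` letters of `w`. -/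
def rightCount (w : List Bool) (i : ℕ) : ℕ := (w.take i).count false

/-- `w` is an `(m,n)`-Dyck path: a word with `n` North letters (`true`) and `m` East
letters (`false`), each of whose prefixes with `b` North and `a` East letters
satisfies `b*m - a*n ≥ 0`. -/
def IsDyck (m n : ℕ) (w : List Bool) : Prop :=
  w.length = m + n ∧ w.count true = n ∧
  ∀ i, n * rightCount w i ≤ m * upCount w i

/-- The rank of the `(i+1)`-st step (0-indexed `i`) of `w`, namely `b*m - a*n` where
`b` and `a` are the numbers of North and East letters among the first `i` letters. -/
def rank (m n : ℕ) (w : List Bool) (i : ℕ) : ℤ :=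
  (m : ℤ) * upCount w i - (n : ℤ) * rightCount w i

/-- The sweep map: list the steps of `w` in increasing order of their ranks. -/
def sweep (m n : ℕ) (w : List Bool) : List Bool :=
  (((List.range w.length).mergeSort
      (fun i j => decide (rank m n w i ≤ rank m n w j))).map
    (fun i => w.getD i false))

/-- The word `EN(w)`: list the steps of `w` in increasing order of their end ranks
(the end rank of the `(i+1)`-st step is `rank w (i+1)`). -/
def sweepEN (m n : ℕ) (w : List Bool) : List Bool :=
  (((List.range w.length).mergeSort
      (fun i j => decide (rank m n w (i + 1) ≤ rank m n w (j + 1)))).map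
    (fun i => w.getD i false))

/-- One step of the filling algorithm: place entry `p.1` according to letter `p.2`
(`true` = S : start a new column; `false` = W : put it below the smallest active
entry, an active entry being the current bottom entry of a column of height `< k+1`). -/
def fillStep (k : ℕ) (cols : List (List ℕ)) (p : ℕ × Bool) : List (List ℕ) :=
  if p.2 then cols ++ [[p.1]]
  else
    match ((List.range cols.length).filter
        (fun j => (cols.getD j []).length < k + 1)).argmin
        (fun j => (cols.getD j []).getLastD 0) with
    | none => cols
    | some j => cols.set j ((cols.getD j []) ++ [p.1])

/-- The state (list of columns, each recorded top to bottom) of the filling algorithm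
after the entries `1, …, t` have been placed according to the first `t` letters of `w`. -/
def fillColsUpTo (k : ℕ) (w : List Bool) (t : ℕ) : List (List ℕ) :=
  ((List.range t).map (fun i => (i + 1, w.getD i false))).foldl (fillStep k) []

/-- The final state of the filling algorithm on the word `w` (entries
`1, …, m+n-1` placed, i.e. all letters but the last one processed). -/
def fillCols (k : ℕ) (w : List Bool) : List (List ℕ) :=
  fillColsUpTo k w (w.length - 1)

/-- The tableau `T(D)` produced by the filling algorithm, as a function
(row, column) ↦ entry, rows and columns 0-indexed. -/
def fillTableau (k n : ℕ) (w : List Bool) : Fin (k + 1) → Fin n → ℕ :=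
  fun i j => ((fillCols k w).getD j []).getD i 0

/-- `T` fills the `(k+1) × n` array with `1, …, (k+1)n`, increasing along rows and
columns. -/
def IsFilling (k n : ℕ) (T : Fin (k + 1) → Fin n → ℕ) : Prop :=
  (∀ i j, T i j ∈ Finset.Icc 1 ((k + 1) * n)) ∧
  Function.Injective (fun p : Fin (k + 1) × Fin n => T p.1 p.2) ∧
  (∀ i, StrictMono (T i)) ∧
  (∀ j, StrictMono (fun i => T i j))

/-- For all entries `a < b < c < d` of `T` with `d` directly below `a`, the entries
`b` and `c` do not lie in the same column. -/
def NoBadQuadruple (k n : ℕ) (T : Fin (k + 1) → Fin n → ℕ) : Prop :=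
  ∀ (i : Fin (k + 1)) (hi : (i : ℕ) + 1 < k + 1) (j : Fin n)
    (r r' : Fin (k + 1)) (c : Fin n), r < r' →
      ¬ (T i j < T r c ∧ T r c < T r' c ∧ T r' c < T ⟨(i : ℕ) + 1, hi⟩ j)

/-- The family `𝒯ₙᵏ` of tableaux. -/
def IsFussTableau (k n : ℕ) (T : Fin (k + 1) → Fin n → ℕ) : Prop :=
  IsFilling k n T ∧ NoBadQuadruple k n T

/-- A value `r` is marked for `T` when `r - 1` is a bottom-row entry of `T`. -/
def Marked (k n : ℕ) (T : Fin (k + 1) → Fin n → ℕ) (r : ℕ) : Prop :=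
  ∃ j : Fin n, T (Fin.last k) j + 1 = r

/-- One move of the walk `w(T)` on the values `1, …, M` (where `M = m + n`):
from a row-1 entry `x` move to `r + 1` where `r` is the bottom entry of the column
of `x`; from an entry `x` of one of the rows `2, …, k+1` move to the largest
unmarked value `≤ r`, where `r` is the entry directly above `x`; from `x = M`
move to the largest unmarked value `< M`. -/
noncomputable def walkStep (k n M : ℕ) (T : Fin (k + 1) → Fin n → ℕ) (x : ℕ) : ℕ :=
  if h : ∃ j : Fin n, T 0 j = x then
    T (Fin.last k) (Classical.choose h) + 1
  else if h2 : ∃ p : Fin (k + 1) × Fin n, T p.1 p.2 = x then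
    let p := Classical.choose h2
    ((((Finset.Icc 1 M).filter
        (fun y => y ≤ T (⟨(p.1 : ℕ) - 1, lt_of_le_of_lt (Nat.sub_le _ _) p.1.2⟩ : Fin (k + 1)) p.2
          ∧ ¬ Marked k n T y))).max).getD 0
  else
    ((((Finset.Icc 1 M).filter (fun y => y < M ∧ ¬ Marked k n T y))).max).getD 0

/-- The area of the path `w`: the number of lattice cells of the `m × n` rectangle
lying below the path whose interiors lie entirely above the diagonal.
The cell in column `x` and row `y` (0-indexed) has its interior above the diagonal
iff `n*(x+1) ≤ m*y`, and lies below the path iff the `(y+1)`-st North step of `w`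
occurs before the `(x+1)`-st East step. -/
def nthLetterIdx (w : List Bool) (b : Bool) (j : ℕ) : ℕ :=
  (((List.range w.length).filter (fun i => w.getD i false = b))).getD j 0

def area (m n : ℕ) (w : List Bool) : ℕ :=
  ((Finset.range m ×ˢ Finset.range n).filter
    (fun p => n * (p.1 + 1) ≤ m * p.2 ∧
      nthLetterIdx w true p.2 < nthLetterIdx w false p.1)).card

/-- The reduction `red(T)`: delete column 1 and replace each remaining entry `i` by
`i` minus the number of column-1 entries smaller than `i`. -/
def red (k n : ℕ) (T : Fin (k + 1) → Fin n → ℕ) : Fin (k + 1) → Fin (n - 1) → ℕ :=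
  fun i j =>
    let v := T i ⟨(j : ℕ) + 1, by have := j.2; omega⟩
    v - (Finset.univ.filter
      (fun u : Fin (k + 1) => T u ⟨0, by have := j.2; omega⟩ < v)).card

/-- The (finite) set of `(m,n)`-Dyck paths as a `Finset` of words. -/
noncomputable def dyckFinset (m n : ℕ) : Finset (List Bool) :=
  ((Finset.univ : Finset (Fin (m + n) → Bool)).image List.ofFn).filter
    (fun w => IsDyck m n w)

/-!
Uniqueness: by downward induction on `v`, two tableaux with the same bottom row put `v` in the
same cell. Otherwise both copies of `v` lie outside the bottom row, the cells directly below them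
hold larger values and hence agree, and the forbidden pattern, applied in each tableau, forces
these two cells below to coincide.

Necessity: the `(j+1)(k+1)` cells weakly left of column `j` hold distinct values, all at most the
bottom entry of column `j`.

Existence: place the values `(k+1)n, …, 1` in decreasing order. The value `b j` starts column
`j` at the bottom; any other value goes on top of the active (nonempty, not yet full) column
whose top entry is largest. The bound `b j ≥ (j+1)(k+1)` guarantees by counting that an active
column exists whenever one is needed. A column further right always has more entries above any
given value, so rows increase; and the choice of the largest top excludes the forbidden pattern.
-/

open Finset

namespace IsFilling

variable {k n : ℕ} {T : Fin (k + 1) → Fin n → ℕ}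

lemma exists_eq (hT : IsFilling k n T) {v : ℕ} (hv : v ∈ Icc 1 ((k + 1) * n)) :
    ∃ i j, T i j = v := by
  have himage : univ.image (fun p : Fin (k + 1) × Fin n => T p.1 p.2) = Icc 1 ((k + 1) * n) :=
    eq_of_subset_of_card_le (image_subset_iff.mpr fun p _ => hT.1 p.1 p.2)
      (by rw [card_image_of_injective _ hT.2.1]; simp)
  obtain ⟨p, -, hp⟩ := mem_image.mp (himage ▸ hv)
  exact ⟨p.1, p.2, hp⟩

lemma succ_mul_le_last (hT : IsFilling k n T) (j : Fin n) :
    ((j : ℕ) + 1) * (k + 1) ≤ T (Fin.last k) j := by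
  have hsub : (univ ×ˢ Iic j).image (fun p : Fin (k + 1) × Fin n => T p.1 p.2) ⊆
      Icc 1 (T (Fin.last k) j) := by
    refine image_subset_iff.mpr fun p hp => mem_Icc.mpr ⟨(mem_Icc.mp (hT.1 p.1 p.2)).1, ?_⟩
    calc T p.1 p.2 ≤ T p.1 j := (hT.2.2.1 p.1).monotone (mem_Iic.mp (mem_product.mp hp).2)
      _ ≤ T (Fin.last k) j := (hT.2.2.2 j).monotone (Fin.le_last p.1)
  have := card_le_card hsub
  rwa [card_image_of_injective _ hT.2.1, card_product, card_univ, Fintype.card_fin,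
    Fin.card_Iic, Nat.card_Icc, Nat.add_sub_cancel, mul_comm] at this

end IsFilling

namespace IsFussTableau

variable {k n : ℕ} {T T' : Fin (k + 1) → Fin n → ℕ}

lemma succ_le_succ_of_castSucc_lt (hT : IsFussTableau k n T) {i i' : Fin k} {j j' : Fin n}
    (h : T i'.castSucc j' < T i.castSucc j) : T i'.succ j' ≤ T i.succ j :=
  not_lt.mp fun hlt => hT.2 i'.castSucc i'.succ.isLt j' i.castSucc i.succ j Fin.castSucc_lt_succ
    ⟨h, hT.1.2.2.2 j Fin.castSucc_lt_succ, hlt⟩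

lemma apply_eq_of_agree_above (hT : IsFussTableau k n T) (hT' : IsFussTableau k n T')
    (hbot : ∀ j, T (Fin.last k) j = T' (Fin.last k) j) {v : ℕ}
    (habove : ∀ i j, v < T i j ∨ v < T' i j → T i j = T' i j)
    {i : Fin (k + 1)} {j : Fin n} (hv : T i j = v) : T' i j = v := by
  obtain ⟨i', j', hv'⟩ := hT'.1.exists_eq (hv ▸ hT.1.1 i j)
  have hinj : ∀ {p q : Fin (k + 1) × Fin n}, T p.1 p.2 = T q.1 q.2 → p = q :=
    fun h => hT.1.2.1 h
  have hinj' : ∀ {p q : Fin (k + 1) × Fin n}, T' p.1 p.2 = T' q.1 q.2 → p = q :=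
    fun h => hT'.1.2.1 h
  suffices (i', j') = (i, j) by cases this; exact hv'
  rcases Fin.eq_castSucc_or_eq_last i with ⟨i, rfl⟩ | rfl
  swap
  · exact hinj' (hv'.trans (hv.symm.trans (hbot j)))
  rcases Fin.eq_castSucc_or_eq_last i' with ⟨i', rfl⟩ | rfl
  swap
  · exact hinj ((hbot j').trans (hv'.trans hv.symm))
  have hle : T i'.castSucc j' ≤ v := not_lt.mp fun h => (habove _ _ (.inl h) ▸ hv' ▸ h).false
  have hle' : T' i.castSucc j ≤ v := not_lt.mp fun h => (habove _ _ (.inr h) ▸ hv ▸ h).false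
  rcases hle.lt_or_eq with hlt | heq
  swap
  · exact hinj (heq.trans hv.symm)
  rcases hle'.lt_or_eq with hlt' | heq'
  swap
  · exact hinj' (hv'.trans heq'.symm)
  have hd : v < T i.succ j := hv ▸ hT.1.2.2.2 j Fin.castSucc_lt_succ
  have hd' : v < T' i'.succ j' := hv' ▸ hT'.1.2.2.2 j' Fin.castSucc_lt_succ
  -- The forbidden pattern, in `T` and in `T'`, puts the same value below both copies of `v`.
  have h₁ := hT.succ_le_succ_of_castSucc_lt (hv ▸ hlt)
  have h₂ := hT'.succ_le_succ_of_castSucc_lt (hv' ▸ hlt')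
  rw [← habove _ _ (.inl hd), ← habove _ _ (.inr hd')] at h₂
  obtain ⟨hi, rfl⟩ :=
    Prod.mk.inj (hinj (p := (i'.succ, j')) (q := (i.succ, j)) (le_antisymm h₁ h₂))
  rw [Fin.succ_inj.mp hi]

lemma eq_of_bottom_eq (hT : IsFussTableau k n T) (hT' : IsFussTableau k n T')
    (hbot : ∀ j, T (Fin.last k) j = T' (Fin.last k) j) : T = T' := by
  have hagree : ∀ i j, 0 < T i j ∨ 0 < T' i j → T i j = T' i j := by
    refine Nat.decreasingInduction
      (motive := fun v _ => ∀ i j, v < T i j ∨ v < T' i j → T i j = T' i j)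
      (fun v _ ih i j h => ?_) (fun i j h => ?_) (Nat.zero_le ((k + 1) * n))
    · by_cases h' : v + 1 < T i j ∨ v + 1 < T' i j
      · exact ih i j h'
      rcases h with h | h
      · have hv : T i j = v + 1 := by omega
        rw [hv, hT.apply_eq_of_agree_above hT' hbot ih hv]
      · have hv : T' i j = v + 1 := by omega
        rw [hv, hT'.apply_eq_of_agree_above hT (fun j => (hbot j).symm)
          (fun i j h => (ih i j h.symm).symm) hv]
    · have := (mem_Icc.mp (hT.1.1 i j)).2
      have := (mem_Icc.mp (hT'.1.1 i j)).2
      omega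
  funext i j
  exact hagree i j (.inl (mem_Icc.mp (hT.1.1 i j)).1)

end IsFussTableau

section ColumnTableau

variable {k n : ℕ} {C : Fin n → Finset ℕ}

noncomputable def columnTableau (k : ℕ) (C : Fin n → Finset ℕ) :
    Fin (k + 1) → Fin n → ℕ :=
  fun i j => if h : (C j).card = k + 1 then (C j).orderEmbOfFin h i else 0

lemma columnTableau_eq (hC : ∀ j, (C j).card = k + 1) (i : Fin (k + 1)) (j : Fin n) :
    columnTableau k C i j = (C j).orderEmbOfFin (hC j) i :=
  dif_pos (hC j)

lemma columnTableau_mem (hC : ∀ j, (C j).card = k + 1) (i : Fin (k + 1)) (j : Fin n) :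
    columnTableau k C i j ∈ C j := by
  rw [columnTableau_eq hC]
  exact orderEmbOfFin_mem _ _ i

lemma strictMono_columnTableau (hC : ∀ j, (C j).card = k + 1) (j : Fin n) :
    StrictMono fun i => columnTableau k C i j := by
  simp only [columnTableau_eq hC]
  exact ((C j).orderEmbOfFin (hC j)).strictMono

lemma exists_columnTableau_eq (hC : ∀ j, (C j).card = k + 1) {j : Fin n} {u : ℕ}
    (hu : u ∈ C j) : ∃ i, columnTableau k C i j = u := by
  simp only [columnTableau_eq hC]
  rwa [← Set.mem_range, range_orderEmbOfFin]

lemma columnTableau_last (hC : ∀ j, (C j).card = k + 1) {j : Fin n} {b : ℕ} (hb : b ∈ C j)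
    (hmax : ∀ u ∈ C j, u ≤ b) : columnTableau k C (Fin.last k) j = b := by
  obtain ⟨i, rfl⟩ := exists_columnTableau_eq hC hb
  exact le_antisymm (hmax _ (columnTableau_mem hC _ j))
    ((strictMono_columnTableau hC j).monotone (Fin.le_last i))

lemma card_filter_lt_column (hC : ∀ j, (C j).card = k + 1) (j : Fin n) (u : ℕ) :
    ((C j).filter (u < ·)).card = (univ.filter fun i => u < columnTableau k C i j).card := by
  conv_lhs => rw [← image_orderEmbOfFin_univ (C j) (hC j), filter_image]
  rw [card_image_of_injective _ ((C j).orderEmbOfFin (hC j)).injective]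
  simp only [columnTableau_eq hC]

lemma isFilling_columnTableau (hC : ∀ j, (C j).card = k + 1)
    (hsub : ∀ j, C j ⊆ Icc 1 ((k + 1) * n))
    (hdisj : ∀ {j j' u}, u ∈ C j → u ∈ C j' → j = j')
    (hrow : ∀ {j j' u}, j < j' → u ∈ C j →
      ((C j).filter (u < ·)).card < ((C j').filter (u < ·)).card) :
    IsFilling k n (columnTableau k C) := by
  set T := columnTableau k C
  refine ⟨fun i j => hsub j (columnTableau_mem hC i j), fun p q h => ?_,
    fun i j j' hjj' => ?_, strictMono_columnTableau hC⟩
  · have hj : p.2 = q.2 := hdisj (columnTableau_mem hC p.1 p.2)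
      ((congrArg (· ∈ C q.2) h).mpr (columnTableau_mem hC q.1 q.2))
    obtain ⟨i, j⟩ := p
    obtain ⟨i', j'⟩ := q
    obtain rfl : j = j' := hj
    obtain rfl : i = i' := (strictMono_columnTableau hC j).injective h
    rfl
  · by_contra hle
    have hlt := hrow hjj' (columnTableau_mem hC i j)
    rw [card_filter_lt_column hC, card_filter_lt_column hC] at hlt
    have hcol : univ.filter (fun i' => T i j < T i' j) = Ioi i := by
      ext i'
      simp [T, (strictMono_columnTableau hC j).lt_iff_lt]
    have hcol' : univ.filter (fun i' => T i j < T i' j') ⊆ Ioi i := fun i' hi' =>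
      mem_Ioi.mpr ((strictMono_columnTableau hC j').lt_iff_lt.mp
        ((not_lt.mp hle).trans_lt (mem_filter.mp hi').2))
    exact (card_le_card hcol').not_gt (hcol ▸ hlt)

end ColumnTableau

namespace Greedy

variable {k n : ℕ} {b : Fin n → ℕ} {g : ℕ → Option (Fin n)} {v : ℕ}

/-- A partial filling is a map `g` with `g u = some j` when the value `u` has been placed in
column `j`. -/
def column (k : ℕ) (g : ℕ → Option (Fin n)) (j : Fin n) : Finset ℕ :=
  (Icc 1 ((k + 1) * n)).filter (g · = some j)

lemma mem_column {j : Fin n} {u : ℕ} :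
    u ∈ column k g j ↔ (1 ≤ u ∧ u ≤ (k + 1) * n) ∧ g u = some j := by
  simp [column]

def IsActive (k : ℕ) (g : ℕ → Option (Fin n)) (j : Fin n) : Prop :=
  0 < (column k g j).card ∧ (column k g j).card ≤ k

/-- Columns increase downwards, so `Finset.min` of a column is its top entry. -/
def IsChoice (k : ℕ) (b : Fin n → ℕ) (g : ℕ → Option (Fin n)) (v : ℕ) (c : Fin n) :
    Prop :=
  b c = v ∨ (∀ j, b j ≠ v) ∧ IsActive k g c ∧
    ∀ j, IsActive k g j → (column k g j).min ≤ (column k g c).min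

noncomputable def pick (k : ℕ) (b : Fin n → ℕ) (g : ℕ → Option (Fin n)) (v : ℕ) :
    Option (Fin n) :=
  if h : ∃ j, b j = v then some h.choose
  else if hS : (univ.filter (IsActive k g)).Nonempty then
    some (exists_max_image _ (fun j => (column k g j).min) hS).choose
  else none

/-- `state k b t` has placed the `t` largest values `(k+1)n, …, (k+1)n - t + 1`. -/
noncomputable def state (k : ℕ) (b : Fin n → ℕ) : ℕ → ℕ → Option (Fin n)
  | 0 => fun _ => none
  | t + 1 => Function.update (state k b t) ((k + 1) * n - t)
      (pick k b (state k b t) ((k + 1) * n - t))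

lemma isChoice_of_pick_eq (hv : ∀ j, b j ≠ v) {c : Fin n} (hc : pick k b g v = some c) :
    IsChoice k b g v c := by
  rw [pick, dif_neg fun ⟨j, hj⟩ => hv j hj] at hc
  split_ifs at hc with hS
  obtain ⟨hmem, hmax⟩ := (exists_max_image _ (fun j => (column k g j).min) hS).choose_spec
  cases Option.some_injective _ hc
  exact .inr ⟨hv, (mem_filter.mp hmem).2,
    fun j hj => hmax j (mem_filter.mpr ⟨mem_univ j, hj⟩)⟩

lemma exists_pick_eq_of_isActive (hv : ∀ j, b j ≠ v) {j : Fin n} (hj : IsActive k g j) :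
    ∃ c, pick k b g v = some c := by
  rw [pick, dif_neg fun ⟨j, hj⟩ => hv j hj,
    dif_pos ⟨j, mem_filter.mpr ⟨mem_univ j, hj⟩⟩]
  exact ⟨_, rfl⟩

lemma pick_eq_of_eq (hb : Function.Injective b) {j : Fin n} (hj : b j = v) :
    pick k b g v = some j := by
  have h : ∃ j, b j = v := ⟨j, hj⟩
  rw [pick, dif_pos h, hb (h.choose_spec.trans hj.symm)]

lemma state_apply_of_lt {t t' u : ℕ} (htt' : t ≤ t') (hu : (k + 1) * n - t < u) :
    state k b t' u = state k b t u := by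
  induction t', htt' using Nat.le_induction with
  | base => rfl
  | succ t' _ ih => rw [state, Function.update_of_ne (by omega), ih]

lemma state_sub_add_one_self {x : ℕ} (hx : x ≤ (k + 1) * n) :
    state k b ((k + 1) * n - x + 1) x = pick k b (state k b ((k + 1) * n - x)) x := by
  rw [state, Nat.sub_sub_self hx, Function.update_self]

lemma filter_column_update_of_le {o : Option (Fin n)} {j : Fin n} {u : ℕ} (hvu : v ≤ u) :
    (column k (Function.update g v o) j).filter (u < ·) = (column k g j).filter (u < ·) := by
  ext x
  by_cases hx : u < x
  · simp [mem_column, hx, Function.update_of_ne (show x ≠ v by omega)]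
  · simp [hx]

lemma column_update_self (hv0 : 0 < v) (hvN : v ≤ (k + 1) * n) {c : Fin n} :
    column k (Function.update g v (some c)) c = insert v (column k g c) := by
  ext u
  by_cases hu : u = v
  · subst hu
    simp [mem_column, hvN]
    omega
  · simp [mem_column, hu]

lemma column_update_of_ne {c j : Fin n} (hj : j ≠ c) (hgv : g v ≠ some j) :
    column k (Function.update g v (some c)) j = column k g j := by
  ext u
  by_cases hu : u = v
  · subst hu
    simp [mem_column, hgv, Ne.symm hj]
  · simp [mem_column, hu]

/-- The state after the values above `v` have been placed; `card_above_lt` is what makes the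
rows increase. -/
structure Invariant (k : ℕ) (b : Fin n → ℕ) (g : ℕ → Option (Fin n)) (v : ℕ) :
    Prop where
  lt_of_eq_some : ∀ {u j}, g u = some j → v < u
  le_of_eq_some : ∀ {u j}, g u = some j → u ≤ b j
  exists_eq_some : ∀ {u}, v < u → u ≤ (k + 1) * n → ∃ j, g u = some j
  eq_some_of_lt : ∀ {j}, v < b j → g (b j) = some j
  card_column_le : ∀ j, (column k g j).card ≤ k + 1
  card_above_lt : ∀ {j j' u}, j < j' → g u = some j →
    ((column k g j).filter (u < ·)).card < ((column k g j').filter (u < ·)).card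

namespace Invariant

lemma init (hbN : ∀ j, b j ≤ (k + 1) * n) : Invariant k b (fun _ => none) ((k + 1) * n) where
  lt_of_eq_some := by simp
  le_of_eq_some := by simp
  exists_eq_some hu hu' := absurd hu' (not_le.mpr hu)
  eq_some_of_lt hj := absurd hj (not_lt.mpr (hbN _))
  card_column_le j := by simp [column]
  card_above_lt := by simp

lemma mem_column_iff (h : Invariant k b g v) (hbN : ∀ j, b j ≤ (k + 1) * n) {j : Fin n}
    {u : ℕ} : u ∈ column k g j ↔ g u = some j :=
  ⟨fun hu => (mem_column.mp hu).2, fun hu => mem_column.mpr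
    ⟨⟨by have := h.lt_of_eq_some hu; omega, (h.le_of_eq_some hu).trans (hbN j)⟩, hu⟩⟩

lemma filter_column_eq (h : Invariant k b g v) (j : Fin n) :
    (column k g j).filter (v < ·) = column k g j :=
  filter_true_of_mem fun _ hx => h.lt_of_eq_some (mem_column.mp hx).2

lemma card_column_pos_iff (h : Invariant k b g v) (hbN : ∀ j, b j ≤ (k + 1) * n) {j : Fin n} :
    0 < (column k g j).card ↔ v < b j := by
  rw [card_pos]
  refine ⟨fun ⟨u, hu⟩ => ?_,
    fun hj => ⟨b j, (h.mem_column_iff hbN).mpr (h.eq_some_of_lt hj)⟩⟩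
  have hu' := (h.mem_column_iff hbN).mp hu
  exact (h.lt_of_eq_some hu').trans_le (h.le_of_eq_some hu')

lemma sum_card_column (h : Invariant k b g v) (hbN : ∀ j, b j ≤ (k + 1) * n) :
    ∑ j, (column k g j).card = (k + 1) * n - v := by
  have hunion : univ.biUnion (column k g) = Ioc v ((k + 1) * n) := by
    ext u
    simp only [mem_biUnion, mem_univ, true_and, mem_Ioc, h.mem_column_iff hbN]
    exact ⟨fun ⟨j, hj⟩ => ⟨h.lt_of_eq_some hj, (h.le_of_eq_some hj).trans (hbN j)⟩,
      fun ⟨h₁, h₂⟩ => h.exists_eq_some h₁ h₂⟩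
  rw [← card_biUnion, hunion, Nat.card_Ioc]
  intro j _ j' _ hjj'
  exact disjoint_left.mpr fun u hu hu' =>
    hjj' (Option.some_injective _ ((mem_column.mp hu).2.symm.trans (mem_column.mp hu').2))

lemma card_column_eq (h : Invariant k b g 0) (hbN : ∀ j, b j ≤ (k + 1) * n) (j : Fin n) :
    (column k g j).card = k + 1 := by
  have hsum : ∑ j, (column k g j).card = ∑ _j : Fin n, (k + 1) := by
    rw [h.sum_card_column hbN, sum_const, card_univ, Fintype.card_fin, smul_eq_mul, mul_comm]
    rfl
  exact (sum_eq_sum_iff_of_le fun j _ => h.card_column_le j).mp hsum j (mem_univ j)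

lemma exists_isActive (h : Invariant k b g v) (hbN : ∀ j, b j ≤ (k + 1) * n)
    (hb : ∀ j : Fin n, ((j : ℕ) + 1) * (k + 1) ≤ b j) (hv0 : 0 < v) (hvN : v ≤ (k + 1) * n)
    (hv : ∀ j, b j ≠ v) : ∃ j, IsActive k g j := by
  by_contra hact
  push Not at hact
  have hcard : ∀ j, (column k g j).card = if v < b j then k + 1 else 0 := by
    intro j
    have := h.card_column_le j
    have := hact j
    have := h.card_column_pos_iff hbN (j := j)
    unfold IsActive at *
    split_ifs <;> omega
  -- With every started column full, `v` is a multiple of `k + 1` ...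
  set S := univ.filter fun j => ¬ v < b j
  have hS : v = S.card * (k + 1) := by
    have hsum := h.sum_card_column hbN
    simp only [hcard, sum_ite, sum_const_zero, sum_const, smul_eq_mul, add_zero] at hsum
    have hsplit := card_filter_add_card_filter_not (s := univ) fun j => v < b j
    rw [card_univ, Fintype.card_fin] at hsplit
    have : (k + 1) * n = (univ.filter fun j => v < b j).card * (k + 1) + S.card * (k + 1) := by
      rw [← add_mul, hsplit, mul_comm]
    omega
  -- ... and the last column not yet started is squeezed to `b j = v`.
  have hne : S.Nonempty := card_pos.mp (Nat.pos_of_mul_pos_right (hS ▸ hv0))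
  set j := S.max' hne
  have hjS : ¬ v < b j := (mem_filter.mp (S.max'_mem hne)).2
  have hSj : S.card ≤ (j : ℕ) + 1 :=
    (Fin.card_Iic j).symm ▸ card_le_card fun j' hj' => mem_Iic.mpr (S.le_max' j' hj')
  have := hb j
  have := Nat.mul_le_mul_right (k + 1) hSj
  exact hv j (by omega)

lemma card_column_lt_of_isActive (h : Invariant k b g v) (hbN : ∀ j, b j ≤ (k + 1) * n)
    {c j : Fin n} (hc : IsActive k g c)
    (hmax : ∀ j, IsActive k g j → (column k g j).min ≤ (column k g c).min)
    (hcj : c < j) : (column k g c).card < (column k g j).card := by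
  obtain ⟨m, hm⟩ := min_of_nonempty (card_pos.mp hc.1)
  have hmc : m ∈ column k g c := mem_of_min hm
  have habove : ((column k g c).filter (m < ·)).card = (column k g c).card - 1 := by
    rw [← card_erase_of_mem hmc]
    congr 1
    ext x
    simp only [mem_filter, mem_erase]
    exact ⟨fun ⟨hx, hmx⟩ => ⟨hmx.ne', hx⟩,
      fun ⟨hxm, hx⟩ => ⟨hx, (min_le_of_eq hx hm).lt_of_ne' hxm⟩⟩
  have hlt := h.card_above_lt hcj ((h.mem_column_iff hbN).mp hmc)
  have hle := card_filter_le (column k g j) (m < ·)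
  by_contra hge
  -- Equal heights would make column `j` active with all its entries above the top `m` of `c`.
  have hfull : (column k g j).filter (m < ·) = column k g j :=
    eq_of_subset_of_card_le (filter_subset _ _) (by omega)
  have hact : IsActive k g j := ⟨by omega, by have := hc.2; omega⟩
  have hmin : ((m + 1 : ℕ) : WithTop ℕ) ≤ (column k g j).min := by
    refine Finset.le_min fun x hx => WithTop.coe_le_coe.mpr ?_
    rw [← hfull] at hx
    exact (mem_filter.mp hx).2
  have := hmin.trans (hmax j hact)
  rw [hm] at this
  have : m + 1 ≤ m := WithTop.coe_le_coe.mp this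
  omega

lemma le_of_isChoice (h : Invariant k b g v) (hbN : ∀ j, b j ≤ (k + 1) * n) {c : Fin n}
    (hc : IsChoice k b g v c) : v ≤ b c := by
  rcases hc with hbc | ⟨-, hact, -⟩
  · exact hbc.ge
  · exact ((h.card_column_pos_iff hbN).mp hact.1).le

lemma card_column_le_of_isChoice (h : Invariant k b g v) (hbN : ∀ j, b j ≤ (k + 1) * n)
    {c : Fin n} (hc : IsChoice k b g v c) : (column k g c).card ≤ k := by
  rcases hc with hbc | ⟨-, hact, -⟩
  · have := h.card_column_pos_iff hbN (j := c)
    omega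
  · exact hact.2

lemma card_column_lt_of_isChoice (h : Invariant k b g v) (hbN : ∀ j, b j ≤ (k + 1) * n)
    (hmono : StrictMono b) {c j : Fin n} (hc : IsChoice k b g v c) (hcj : c < j) :
    (column k g c).card < (column k g j).card := by
  rcases hc with hbc | ⟨-, hact, hmax⟩
  · have := (h.card_column_pos_iff hbN).mpr (hbc ▸ hmono hcj)
    have := h.card_column_pos_iff hbN (j := c)
    omega
  · exact h.card_column_lt_of_isActive hbN hact hmax hcj

lemma update (h : Invariant k b g v) (hbN : ∀ j, b j ≤ (k + 1) * n) (hmono : StrictMono b)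
    (hv0 : 0 < v) (hvN : v ≤ (k + 1) * n) {c : Fin n} (hc : IsChoice k b g v c) :
    Invariant k b (Function.update g v (some c)) (v - 1) := by
  have hgv : ∀ j, g v ≠ some j := fun j hj => (h.lt_of_eq_some hj).false
  have hg' : ∀ {u j}, Function.update g v (some c) u = some j ↔
      u = v ∧ j = c ∨ u ≠ v ∧ g u = some j := by
    intro u j
    by_cases hu : u = v
    · subst hu
      simp [eq_comm]
    · simp [hu]
  refine ⟨fun hu => ?_, fun hu => ?_, fun {u} hu hu' => ?_, fun {j} hj => ?_, fun j => ?_,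
    fun {j j' u} hjj' hu => ?_⟩
  · rcases hg'.mp hu with ⟨rfl, -⟩ | ⟨-, hu⟩
    · omega
    · have := h.lt_of_eq_some hu
      omega
  · rcases hg'.mp hu with ⟨rfl, rfl⟩ | ⟨-, hu⟩
    · exact h.le_of_isChoice hbN hc
    · exact h.le_of_eq_some hu
  · by_cases huv : u = v
    · exact ⟨c, hg'.mpr (.inl ⟨huv, rfl⟩)⟩
    · obtain ⟨j, hj⟩ := h.exists_eq_some (by omega) hu'
      exact ⟨j, hg'.mpr (.inr ⟨huv, hj⟩)⟩
  · by_cases hjv : b j = v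
    · obtain rfl : j = c := by
        rcases hc with hbc | ⟨hne, -⟩
        · exact hmono.injective (hjv.trans hbc.symm)
        · exact absurd hjv (hne j)
      exact hg'.mpr (.inl ⟨hjv, rfl⟩)
    · exact hg'.mpr (.inr ⟨hjv, h.eq_some_of_lt (by omega)⟩)
  · by_cases hj : j = c
    · subst hj
      rw [column_update_self hv0 hvN, card_insert_of_notMem fun hv => hgv j (mem_column.mp hv).2]
      have := h.card_column_le_of_isChoice hbN hc
      omega
    · exact column_update_of_ne hj (hgv j) ▸ h.card_column_le j
  · rcases hg'.mp hu with ⟨rfl, rfl⟩ | ⟨-, hu⟩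
    · rw [filter_column_update_of_le le_rfl, filter_column_update_of_le le_rfl,
        h.filter_column_eq, h.filter_column_eq]
      exact h.card_column_lt_of_isChoice hbN hmono hc hjj'
    · have := (h.lt_of_eq_some hu).le
      rw [filter_column_update_of_le this, filter_column_update_of_le this]
      exact h.card_above_lt hjj' hu

end Invariant

lemma invariant_state (hmono : StrictMono b) (hbN : ∀ j, b j ≤ (k + 1) * n)
    (hb : ∀ j : Fin n, ((j : ℕ) + 1) * (k + 1) ≤ b j) {t : ℕ} (ht : t ≤ (k + 1) * n) :
    Invariant k b (state k b t) ((k + 1) * n - t) := by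
  induction t with
  | zero => exact Invariant.init hbN
  | succ t ih =>
    have h := ih (by omega)
    set v := (k + 1) * n - t
    obtain ⟨c, hpick, hc⟩ : ∃ c, pick k b (state k b t) v = some c ∧
        IsChoice k b (state k b t) v c := by
      by_cases hv : ∃ j, b j = v
      · obtain ⟨j, hj⟩ := hv
        exact ⟨j, pick_eq_of_eq hmono.injective hj, .inl hj⟩
      · push Not at hv
        obtain ⟨j, hj⟩ := h.exists_isActive hbN hb (by omega) (by omega) hv
        obtain ⟨c, hc⟩ := exists_pick_eq_of_isActive hv hj
        exact ⟨c, hc, isChoice_of_pick_eq hv hc⟩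
    rw [show (k + 1) * n - (t + 1) = v - 1 by omega, state, hpick]
    exact h.update hbN hmono (by omega) (by omega) hc

lemma column_state {t : ℕ} (ht : t ≤ (k + 1) * n)
    (h : Invariant k b (state k b t) ((k + 1) * n - t)) (j : Fin n) :
    column k (state k b t) j =
      (column k (state k b ((k + 1) * n)) j).filter ((k + 1) * n - t < ·) := by
  ext u
  simp only [mem_filter, mem_column]
  refine ⟨fun ⟨hu, hj⟩ => ?_, fun ⟨⟨hu, hj⟩, hlt⟩ => ⟨hu, ?_⟩⟩
  · have hlt := h.lt_of_eq_some hj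
    exact ⟨⟨hu, (state_apply_of_lt ht hlt).trans hj⟩, hlt⟩
  · rwa [state_apply_of_lt ht hlt] at hj

lemma min_column_le_of_state_eq (hmono : StrictMono b) (hbN : ∀ j, b j ≤ (k + 1) * n)
    (hb : ∀ j : Fin n, ((j : ℕ) + 1) * (k + 1) ≤ b j) {x : ℕ} {c : Fin n} (hx0 : 0 < x)
    (hxN : x ≤ (k + 1) * n) (hx : state k b ((k + 1) * n) x = some c) (hxc : x < b c)
    {j : Fin n} (hj : IsActive k (state k b ((k + 1) * n - x)) j) :
    (column k (state k b ((k + 1) * n - x)) j).min ≤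
      (column k (state k b ((k + 1) * n - x)) c).min := by
  have hfinal : Invariant k b (state k b ((k + 1) * n)) 0 := by
    simpa using invariant_state hmono hbN hb le_rfl
  have hnot : ∀ j', b j' ≠ x := fun j' hj' => by
    obtain rfl : j' = c := Option.some_injective _
      ((hfinal.eq_some_of_lt (hj' ▸ hx0)).symm.trans (hj' ▸ hx))
    omega
  have hpick : pick k b (state k b ((k + 1) * n - x)) x = some c := by
    rw [← state_sub_add_one_self hxN,
      ← state_apply_of_lt (t' := (k + 1) * n) (by omega) (by omega)]
    exact hx
  obtain ⟨-, -, hmax⟩ := (isChoice_of_pick_eq hnot hpick).resolve_left (hnot c)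
  exact hmax j hj

lemma noBadQuadruple_columnTableau_state (hmono : StrictMono b) (hbN : ∀ j, b j ≤ (k + 1) * n)
    (hb : ∀ j : Fin n, ((j : ℕ) + 1) * (k + 1) ≤ b j)
    (hC : ∀ j, (column k (state k b ((k + 1) * n)) j).card = k + 1) :
    NoBadQuadruple k n (columnTableau k (column k (state k b ((k + 1) * n)))) := by
  set g := state k b ((k + 1) * n)
  set T := columnTableau k (column k g)
  rintro i hi j r r' c - ⟨hax, hxy, hyd⟩
  set x := T r c
  set d := T ⟨i + 1, hi⟩ j
  have hfinal : Invariant k b g 0 := by simpa using invariant_state hmono hbN hb le_rfl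
  have hT : ∀ i j, g (T i j) = some j := fun i j =>
    (hfinal.mem_column_iff hbN).mp (columnTableau_mem hC i j)
  have hx : 1 ≤ x ∧ x ≤ (k + 1) * n := (mem_column.mp (columnTableau_mem hC r c)).1
  have hcol : ∀ j, column k (state k b ((k + 1) * n - x)) j = (column k g j).filter (x < ·) :=
    fun j => by
      rw [column_state (Nat.sub_le _ x) (invariant_state hmono hbN hb (Nat.sub_le _ x)) j,
        Nat.sub_sub_self hx.2]
  have hd : d ∈ (column k g j).filter (x < ·) :=
    mem_filter.mpr ⟨columnTableau_mem hC _ j, hxy.trans hyd⟩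
  -- Column `j` holds `d` but not yet `T i j`, so it was active when `x` was placed ...
  have hact : IsActive k (state k b ((k + 1) * n - x)) j := by
    have hsub : (column k g j).filter (x < ·) ⊆ (column k g j).erase (T i j) := fun u hu =>
      mem_erase.mpr ⟨(hax.trans (mem_filter.mp hu).2).ne', (mem_filter.mp hu).1⟩
    have := card_le_card hsub
    rw [card_erase_of_mem (columnTableau_mem hC i j), hC] at this
    rw [IsActive, hcol]
    exact ⟨card_pos.mpr ⟨d, hd⟩, by omega⟩
  -- ... with top entry at least `d`, while the top of column `c` was at most `T r' c < d`.
  have hlow : (d : WithTop ℕ) ≤ ((column k g j).filter (x < ·)).min := by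
    refine Finset.le_min fun u hu => WithTop.coe_le_coe.mpr ?_
    obtain ⟨hu, hxu⟩ := mem_filter.mp hu
    obtain ⟨i', rfl⟩ := exists_columnTableau_eq hC hu
    have hii' : i < i' := (strictMono_columnTableau hC j).lt_iff_lt.mp (hax.trans hxu)
    exact (strictMono_columnTableau hC j).monotone (Nat.succ_le_of_lt hii')
  have hhigh : ((column k g c).filter (x < ·)).min ≤ (T r' c : WithTop ℕ) :=
    min_le (mem_filter.mpr ⟨columnTableau_mem hC r' c, hxy⟩)
  have hmax := min_column_le_of_state_eq hmono hbN hb hx.1 hx.2 (hT r c)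
    (hxy.trans_le (hfinal.le_of_eq_some (hT r' c))) hact
  rw [hcol, hcol] at hmax
  exact hyd.not_ge (WithTop.coe_le_coe.mp ((hlow.trans hmax).trans hhigh))

theorem exists_isFussTableau_bottom_eq (hmono : StrictMono b) (hbN : ∀ j, b j ≤ (k + 1) * n)
    (hb : ∀ j : Fin n, ((j : ℕ) + 1) * (k + 1) ≤ b j) :
    ∃ T, IsFussTableau k n T ∧ ∀ j, T (Fin.last k) j = b j := by
  set g := state k b ((k + 1) * n)
  have h : Invariant k b g 0 := by simpa using invariant_state hmono hbN hb le_rfl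
  have hC := h.card_column_eq hbN
  have hmem : ∀ {j u}, u ∈ column k g j ↔ g u = some j := h.mem_column_iff hbN
  have hbpos : ∀ j, 0 < b j := fun j => (Nat.mul_pos j.val.succ_pos k.succ_pos).trans_le (hb j)
  have hfill : IsFilling k n (columnTableau k (column k g)) :=
    isFilling_columnTableau hC (fun j => filter_subset _ _)
      (fun hu hu' => Option.some_injective _ ((hmem.mp hu).symm.trans (hmem.mp hu')))
      (fun hjj' hu => h.card_above_lt hjj' (hmem.mp hu))
  refine ⟨_, ⟨hfill, noBadQuadruple_columnTableau_state hmono hbN hb hC⟩, fun j => ?_⟩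
  exact columnTableau_last hC (hmem.mpr (h.eq_some_of_lt (hbpos j)))
    fun u hu => h.le_of_eq_some (hmem.mp hu)

end Greedy

/-- A tableau `T ∈ 𝒯ₙᵏ` is uniquely determined by its bottom row;
and an increasing sequence `b` with `b n = (k+1)n` occurs as the bottom row of some
`T ∈ 𝒯ₙᵏ` iff `b j ≥ j(k+1)` for all `j`. -/
theorem statement11 (k n : ℕ) (hn : 0 < n) :
    (∀ T T' : Fin (k + 1) → Fin n → ℕ, IsFussTableau k n T → IsFussTableau k n T' →
      (∀ j, T (Fin.last k) j = T' (Fin.last k) j) → T = T') ∧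
    (∀ b : Fin n → ℕ, StrictMono b → b ⟨n - 1, by omega⟩ = (k + 1) * n →
      ((∃ T : Fin (k + 1) → Fin n → ℕ, IsFussTableau k n T ∧
          ∀ j, T (Fin.last k) j = b j) ↔
        ∀ j : Fin n, ((j : ℕ) + 1) * (k + 1) ≤ b j)) := by
  refine ⟨fun T T' hT hT' hbot => hT.eq_of_bottom_eq hT' hbot,
    fun b hmono hlast => ⟨?_, fun hb => ?_⟩⟩
  · rintro ⟨T, hT, hTb⟩ j
    exact hTb j ▸ hT.1.succ_mul_le_last j
  · have hbN : ∀ j, b j ≤ (k + 1) * n := fun j =>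
      hlast ▸ hmono.monotone (Fin.le_iff_val_le_val.mpr (by simp; omega))
    exact Greedy.exists_isFussTableau_bottom_eq hmono hbN hb
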